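/- Let T ∈ S^d ℂ^{n+1} be a nonzero form of degree d and let A, B ⊆ ℙⁿ(ℂ) be non-redundant finite sets computing T with A ∩ B = ∅. Then Z = A ∪ B satisfies the Cayley–Bacharach property CB(d). -/

import Mathlib

open MvPolynomial

noncomputable section

/-- Projective n-space over ℂ, viewed as classes of linear forms (vectors in ℂ^{n+1}). -/
abbrev Proj (n : ℕ) := Projectivization ℂ (Fin (n + 1) → ℂ)

instance (n : ℕ) : DecidableEq (Proj n) := Classical.decEq _

/-- The linear form with coefficient vector `v`. -/
def linForm (n : ℕ) (v : Fin (n + 1) → ℂ) : MvPolynomial (Fin (n + 1)) ℂ :=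
  ∑ i, MvPolynomial.C (v i) * MvPolynomial.X i

/-- The `d`-th Veronese image of a projective point: the `d`-th power of (a representative of)
the corresponding linear form. -/
def vero (n d : ℕ) (P : Proj n) : MvPolynomial (Fin (n + 1)) ℂ :=
  linForm n P.rep ^ d

/-- `A` computes `T` : the class of `T` lies in the projective linear span of `v_d(A)`,
equivalently `T` lies in the linear span of the `d`-th powers of the points of `A`. -/
def Computes (n d : ℕ) (A : Finset (Proj n)) (T : MvPolynomial (Fin (n + 1)) ℂ) : Prop :=
  T ∈ Submodule.span ℂ (vero n d '' (A : Set (Proj n)))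

/-- `A` is a non-redundant set computing `T`. -/
def NRComputes (n d : ℕ) (A : Finset (Proj n)) (T : MvPolynomial (Fin (n + 1)) ℂ) : Prop :=
  Computes n d A T ∧ ∀ A' ⊂ A, ¬ Computes n d A' T

/-- The (Waring) rank of `T` : minimal cardinality of a finite set computing `T`. -/
def waringRank (n d : ℕ) (T : MvPolynomial (Fin (n + 1)) ℂ) : ℕ :=
  sInf {r | ∃ A : Finset (Proj n), A.card = r ∧ Computes n d A T}

/-- `T` is identifiable: there is exactly one finite set computing `T` whose
cardinality equals the rank of `T`. -/
def Identifiable (n d : ℕ) (T : MvPolynomial (Fin (n + 1)) ℂ) : Prop :=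
  ∃! A : Finset (Proj n), A.card = waringRank n d T ∧ Computes n d A T

/-- The evaluation map of degree `j` on the chosen homogeneous coordinates of `Z`. -/
def evalMap (n j : ℕ) (Z : Finset (Proj n)) :
    MvPolynomial.homogeneousSubmodule (Fin (n + 1)) ℂ j →ₗ[ℂ] (Z → ℂ) where
  toFun F := fun P => MvPolynomial.eval (P.1).rep F.1
  map_add' F G := by funext P; simp
  map_smul' c F := by funext P; simp

/-- The Hilbert function of the finite set `Z` (at a natural number `j`). -/
def hilbN (n : ℕ) (Z : Finset (Proj n)) (j : ℕ) : ℕ :=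
  Module.finrank ℂ (LinearMap.range (evalMap n j Z))

/-- The Hilbert function of the finite set `Z` (zero in negative degrees). -/
def hilb (n : ℕ) (Z : Finset (Proj n)) (j : ℤ) : ℕ :=
  if j < 0 then 0 else hilbN n Z j.toNat

/-- The first difference of the Hilbert function. -/
def Dhilb (n : ℕ) (Z : Finset (Proj n)) (j : ℤ) : ℤ :=
  (hilb n Z j : ℤ) - (hilb n Z (j - 1) : ℤ)

/-- The `d`-th Kruskal rank of `A` : the largest `k` such that every subset of `A`
with at most `k` elements has linearly independent image under `v_d`. -/
def kruskalRank (n d : ℕ) (A : Finset (Proj n)) : ℕ :=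
  sSup {k | k ≤ A.card ∧
    ∀ A' ⊆ A, A'.card ≤ k → LinearIndependent ℂ (fun P : A' => vero n d P.1)}

/-- The Cayley–Bacharach property in degree `d` for the finite set `Z`. -/
def CB (n d : ℕ) (Z : Finset (Proj n)) : Prop :=
  ∀ P ∈ Z, ∀ F : MvPolynomial (Fin (n + 1)) ℂ, F.IsHomogeneous d →
    (∀ Q ∈ Z, Q ≠ P → MvPolynomial.eval Q.rep F = 0) → MvPolynomial.eval P.rep F = 0

end

noncomputable section AuxCB

lemma sum_univ_of_homog {n d : ℕ} {F : MvPolynomial (Fin (n + 1)) ℂ} (hF : F.IsHomogeneous d)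
    {α : Fin (n + 1) →₀ ℕ} (hα : α ∈ F.support) : ∑ i, α i = d := by
  have h := hF (MvPolynomial.mem_support_iff.mp hα)
  simp only [Finsupp.weight_apply, Finsupp.sum, Pi.one_apply, smul_eq_mul, mul_one] at h
  rw [← h]
  exact (Finset.sum_subset (Finset.subset_univ _)
    (fun i _ hi => Finsupp.notMem_support_iff.mp hi)).symm

lemma coeff_linForm_pow {n : ℕ} (d : ℕ) (v : Fin (n + 1) → ℂ) (α : Fin (n + 1) →₀ ℕ)
    (hα : ∑ i, α i = d) :
    MvPolynomial.coeff α ((linForm n v) ^ d)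
      = (Nat.multinomial Finset.univ ⇑α : ℂ) * ∏ i, v i ^ α i := by
  have hterm : ∀ k : Fin (n + 1) → ℕ,
      (Nat.multinomial Finset.univ k : MvPolynomial (Fin (n + 1)) ℂ) *
          ∏ i, (MvPolynomial.C (v i) * MvPolynomial.X i) ^ k i
        = MvPolynomial.monomial (Finsupp.equivFunOnFinite.symm k)
            ((Nat.multinomial Finset.univ k : ℂ) * ∏ i, v i ^ k i) := by
    intro k
    have hX : (∏ i, (MvPolynomial.X i : MvPolynomial (Fin (n + 1)) ℂ) ^ k i)
        = MvPolynomial.monomial (Finsupp.equivFunOnFinite.symm k) 1 := by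
      rw [← MvPolynomial.prod_X_pow_eq_monomial]
      exact (Finset.prod_subset (Finset.subset_univ _)
        (fun i _ hi => by
          have : (Finsupp.equivFunOnFinite.symm k) i = 0 := Finsupp.notMem_support_iff.mp hi
          simp only [Finsupp.coe_equivFunOnFinite_symm] at this ⊢
          rw [this, pow_zero])).symm
    calc (Nat.multinomial Finset.univ k : MvPolynomial (Fin (n + 1)) ℂ) *
          ∏ i, (MvPolynomial.C (v i) * MvPolynomial.X i) ^ k i
        = MvPolynomial.C ((Nat.multinomial Finset.univ k : ℂ) * ∏ i, v i ^ k i) *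
            ∏ i, (MvPolynomial.X i : MvPolynomial (Fin (n + 1)) ℂ) ^ k i := by
          simp only [mul_pow, Finset.prod_mul_distrib, ← map_pow, ← map_prod, map_mul,
            MvPolynomial.C_eq_coe_nat]
          push_cast
          ring
      _ = _ := by rw [hX, MvPolynomial.C_mul_monomial, mul_one]
  rw [linForm, Finset.sum_pow_eq_sum_piAntidiag, MvPolynomial.coeff_sum]
  rw [Finset.sum_congr rfl (fun k _ => by rw [hterm k])]
  rw [Finset.sum_eq_single (⇑α : Fin (n + 1) → ℕ)]
  · rw [Finsupp.equivFunOnFinite_symm_coe, MvPolynomial.coeff_monomial, if_pos rfl]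
  · intro k _ hne
    rw [MvPolynomial.coeff_monomial, if_neg]
    intro h
    apply hne
    have := congrArg (⇑Finsupp.equivFunOnFinite) h
    exact (by simpa using this : k = Finsupp.equivFunOnFinite α)
  · intro h
    exact absurd (Finset.mem_piAntidiag.mpr ⟨hα, fun i _ => Finset.mem_univ i⟩) h

/-- The apolar-type linear functional attached to a form `F`. -/
def pairF (n : ℕ) (F : MvPolynomial (Fin (n + 1)) ℂ) :
    MvPolynomial (Fin (n + 1)) ℂ →ₗ[ℂ] ℂ :=
  ∑ α ∈ F.support,
    (MvPolynomial.coeff α F * (Nat.multinomial Finset.univ ⇑α : ℂ)⁻¹) • MvPolynomial.lcoeff ℂ α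

lemma pairF_vero {n d : ℕ} {F : MvPolynomial (Fin (n + 1)) ℂ} (hF : F.IsHomogeneous d)
    (P : Proj n) : pairF n F (vero n d P) = MvPolynomial.eval P.rep F := by
  rw [pairF, LinearMap.sum_apply, MvPolynomial.eval_eq']
  refine Finset.sum_congr rfl fun α hα => ?_
  rw [LinearMap.smul_apply, MvPolynomial.lcoeff_apply, vero,
    coeff_linForm_pow d _ α (sum_univ_of_homog hF hα), smul_eq_mul]
  have hm : (Nat.multinomial Finset.univ ⇑α : ℂ) ≠ 0 :=
    Nat.cast_ne_zero.mpr (Nat.multinomial_pos _ _).ne'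
  field_simp

lemma computes_sum {n d : ℕ} {A : Finset (Proj n)} {T : MvPolynomial (Fin (n + 1)) ℂ}
    (h : Computes n d A T) : ∃ c : A → ℂ, ∑ Q : A, c Q • vero n d Q.1 = T := by
  rw [Computes, Set.image_eq_range, Submodule.mem_span_range_iff_exists_fun] at h
  exact h

lemma key_cb {n d : ℕ} {T : MvPolynomial (Fin (n + 1)) ℂ}
    {A B : Finset (Proj n)} (hA : NRComputes n d A T) (hB : Computes n d B T)
    {P : Proj n} (hP : P ∈ A) (hPB : P ∉ B)
    {F : MvPolynomial (Fin (n + 1)) ℂ} (hF : F.IsHomogeneous d)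
    (hvan : ∀ Q, (Q ∈ A ∨ Q ∈ B) → Q ≠ P → MvPolynomial.eval Q.rep F = 0) :
    MvPolynomial.eval P.rep F = 0 := by
  obtain ⟨c, hc⟩ := computes_sum hA.1
  obtain ⟨b, hb⟩ := computes_sum hB
  set φ := pairF n F with hφ
  have hφv : ∀ Q : Proj n, φ (vero n d Q) = MvPolynomial.eval Q.rep F :=
    fun Q => pairF_vero hF Q
  have hφT : φ T = 0 := by
    rw [← hb, map_sum]
    refine Finset.sum_eq_zero fun Q _ => ?_
    rw [map_smul, hφv, hvan Q.1 (Or.inr Q.2) (fun h => hPB (h ▸ Q.2)), smul_zero]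
  have hcP : c ⟨P, hP⟩ ≠ 0 := by
    intro h0
    refine hA.2 (A.erase P) (Finset.erase_ssubset hP) ?_
    rw [Computes, ← hc]
    refine Submodule.sum_mem _ fun Q _ => ?_
    by_cases hQ : Q.1 = P
    · have hQ' : Q = ⟨P, hP⟩ := Subtype.ext hQ
      rw [hQ', h0, zero_smul]
      exact Submodule.zero_mem _
    · exact Submodule.smul_mem _ _ (Submodule.subset_span
        ⟨Q.1, by simp [Finset.mem_erase, hQ, Q.2], rfl⟩)
  have hmain : φ T = c ⟨P, hP⟩ * MvPolynomial.eval P.rep F := by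
    rw [← hc, map_sum, Finset.sum_eq_single (⟨P, hP⟩ : A)]
    · rw [map_smul, hφv, smul_eq_mul]
    · intro Q _ hQ
      rw [map_smul, hφv, hvan Q.1 (Or.inl Q.2) (fun h => hQ (Subtype.ext h)), smul_zero]
    · intro h
      exact absurd (Finset.mem_univ _) h
  rw [hφT] at hmain
  exact (mul_eq_zero.mp hmain.symm).resolve_left hcP

end AuxCB

/-- Proposition: if `A`, `B` are disjoint non-redundant finite sets computing `T`,
then `Z = A ∪ B` satisfies the Cayley–Bacharach property `CB(d)`. -/
theorem stmt7 (n d : ℕ)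
    (T : MvPolynomial (Fin (n + 1)) ℂ) (hT0 : T ≠ 0) (hTh : T.IsHomogeneous d)
    (A B : Finset (Proj n)) (hA : NRComputes n d A T) (hB : NRComputes n d B T)
    (hAB : A ∩ B = ∅) :
    CB n d (A ∪ B) := by
  intro P hP F hF hvan
  rw [Finset.mem_union] at hP
  have hvan' : ∀ Q, (Q ∈ A ∨ Q ∈ B) → Q ≠ P → MvPolynomial.eval Q.rep F = 0 :=
    fun Q hQ => hvan Q (Finset.mem_union.mpr hQ)
  have hdisj : ∀ x, x ∈ A → x ∈ B → False := by
    intro x hxA hxB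
    have : x ∈ A ∩ B := Finset.mem_inter.mpr ⟨hxA, hxB⟩
    rw [hAB] at this
    exact absurd this (Finset.notMem_empty x)
  rcases hP with h | h
  · exact key_cb hA hB.1 h (fun hPB => hdisj P h hPB) hF hvan'
  · exact key_cb hB hA.1 h (fun hPA => hdisj P hPA h) hF
      (fun Q hQ => hvan' Q hQ.symm)
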